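/- arXiv:2104.10074 — 2 statements merged into one kernel-verified Lean document; each statement's English description precedes it below -/
import Mathlib

section
/- For all integers n, m, r: L_{n+r}*L_{m+r} + (-1)^{r+1}*L_n*L_m = 5*F_r*F_{n+m+r}. -/
def lucas : ℕ → ℕ
  | 0 => 2
  | 1 => 1
  | n + 2 => lucas (n + 1) + lucas n

def fibZ (n : ℤ) : ℤ :=
  if 0 ≤ n then (Nat.fib n.toNat : ℤ) else (-1) ^ (n.natAbs + 1) * (Nat.fib n.natAbs : ℤ)

def lucasZ (n : ℤ) : ℤ :=
  if 0 ≤ n then (lucas n.toNat : ℤ) else (-1) ^ n.natAbs * (lucas n.natAbs : ℤ)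

/-! By Binet, `L n = φ ^ n + ψ ^ n` and `√5 * F n = φ ^ n - ψ ^ n` for all integers `n`, and
`φ * ψ = -1` turns the sign into `-(φ * ψ) ^ r`. The claim then becomes an identity between
integer powers of two arbitrary nonzero elements `x, y` of a field, in which the cross terms
`x ^ (n + r) * y ^ (m + r)` cancel. -/

open Real goldenRatio

theorem fibZ_eq_intFib (n : ℤ) : fibZ n = Int.fib n := by
  obtain ⟨k, rfl | rfl⟩ := n.eq_nat_or_neg
  · simp [fibZ]
  · rcases k.eq_zero_or_pos with rfl | hk
    · rfl
    · simp [fibZ, Int.fib_neg_natCast]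

theorem lucasZ_natCast (k : ℕ) : lucasZ k = lucas k := by
  simp [lucasZ]

theorem lucasZ_neg_natCast (k : ℕ) : lucasZ (-k) = (-1) ^ k * lucas k := by
  rcases k.eq_zero_or_pos with rfl | hk
  · rfl
  · simp [lucasZ, hk.ne']

theorem coe_lucas_eq : ∀ k : ℕ, (lucas k : ℝ) = φ ^ k + ψ ^ k
  | 0 => by norm_num [lucas]
  | 1 => by simp [lucas, goldenRatio_add_goldenConj]
  | k + 2 => by
    rw [lucas, Nat.cast_add, coe_lucas_eq (k + 1), coe_lucas_eq k]
    linear_combination -(φ ^ k * goldenRatio_sq) - ψ ^ k * goldenConj_sq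

theorem coe_lucasZ_eq (n : ℤ) : (lucasZ n : ℝ) = φ ^ n + ψ ^ n := by
  obtain ⟨k, rfl | rfl⟩ := n.eq_nat_or_neg
  · simp [lucasZ_natCast, coe_lucas_eq]
  · simp only [lucasZ_neg_natCast, zpow_neg, zpow_natCast, ← inv_pow, inv_goldenRatio,
      inv_goldenConj, neg_pow ψ, neg_pow φ]
    push_cast
    rw [coe_lucas_eq]
    ring

theorem coe_fibZ_eq (n : ℤ) : (fibZ n : ℝ) = (φ ^ n - ψ ^ n) / √5 := by
  rw [fibZ_eq_intFib, coe_intFib_eq]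

theorem zpow_add_zpow_mul_zpow_add_zpow_sub {K : Type*} [Field K] {x y : K} (hx : x ≠ 0)
    (hy : y ≠ 0) (n m r : ℤ) :
    (x ^ (n + r) + y ^ (n + r)) * (x ^ (m + r) + y ^ (m + r)) -
        (x * y) ^ r * (x ^ n + y ^ n) * (x ^ m + y ^ m) =
      (x ^ r - y ^ r) * (x ^ (n + m + r) - y ^ (n + m + r)) := by
  simp only [zpow_add₀ hx, zpow_add₀ hy, mul_zpow]
  ring

theorem stmt5 (n m r : ℤ) :
    lucasZ (n + r) * lucasZ (m + r) + (((-1 : ℤˣ) ^ (r + 1) : ℤˣ) : ℤ) * lucasZ n * lucasZ m =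
      5 * fibZ r * fibZ (n + m + r) := by
  have hsign : ((((-1 : ℤˣ) ^ (r + 1) : ℤˣ) : ℤ) : ℝ) = -(φ * ψ) ^ r := by
    rw [← Int.negOnePow_def, Int.cast_negOnePow, goldenRatio_mul_goldenConj,
      zpow_add_one₀ (by norm_num)]
    ring
  have h5 : (√5) ^ 2 = 5 := sq_sqrt (by norm_num)
  apply Int.cast_injective (α := ℝ)
  push_cast
  rw [hsign]
  simp only [coe_lucasZ_eq, coe_fibZ_eq]
  calc _ = (φ ^ r - ψ ^ r) * (φ ^ (n + m + r) - ψ ^ (n + m + r)) := by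
        rw [← zpow_add_zpow_mul_zpow_add_zpow_sub goldenRatio_ne_zero goldenConj_ne_zero]
        ring
    _ = _ := by
        field_simp
        rw [h5]
end

section
/- For all natural numbers n and m: L_{2n}^2 + L_{2m}^2 + 5*F_{2m+2n}^2 = L_{2n}*L_{2m}*L_{2m+2n}. -/
lemma lucas_add_fib (k : ℕ) : lucas k + Nat.fib k = 2 * Nat.fib (k + 1) := by
  induction k using Nat.twoStepInduction with
  | zero => simp [lucas]
  | one => simp [lucas]
  | more k ih1 ih2 =>
    rw [lucas, Nat.fib_add_two, Nat.fib_add_two (n := k + 1)]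
    omega

lemma lucas_int (k : ℕ) : (lucas k : ℤ) = 2 * Nat.fib (k + 1) - Nat.fib k := by
  have h := lucas_add_fib k
  have : (lucas k : ℤ) + Nat.fib k = 2 * Nat.fib (k + 1) := by exact_mod_cast congrArg (Nat.cast : ℕ → ℤ) h
  linarith

lemma cassini (k : ℕ) :
    (Nat.fib (k + 1) : ℤ) ^ 2 - Nat.fib (k + 1) * Nat.fib k - (Nat.fib k : ℤ) ^ 2
      = (-1) ^ k := by
  induction k with
  | zero => simp
  | succ k ih =>
    have h : (Nat.fib (k + 2) : ℤ) = Nat.fib (k + 1) + Nat.fib k := by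
      rw [Nat.fib_add_two]; push_cast; ring
    rw [h, pow_succ]
    linear_combination -ih

theorem stmt12 (n m : ℕ) :
    lucas (2 * n) ^ 2 + lucas (2 * m) ^ 2 + 5 * Nat.fib (2 * m + 2 * n) ^ 2 =
      lucas (2 * n) * lucas (2 * m) * lucas (2 * m + 2 * n) := by
  set a : ℤ := (Nat.fib (2 * n) : ℤ) with ha
  set A : ℤ := (Nat.fib (2 * n + 1) : ℤ) with hA
  set b : ℤ := (Nat.fib (2 * m) : ℤ) with hb
  set B : ℤ := (Nat.fib (2 * m + 1) : ℤ) with hB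
  have cA : A ^ 2 - A * a - a ^ 2 = 1 := by
    have := cassini (2 * n); rw [← hA, ← ha] at this; simpa using this
  have cB : B ^ 2 - B * b - b ^ 2 = 1 := by
    have := cassini (2 * m); rw [← hB, ← hb] at this; simpa using this
  have hsum1 : (Nat.fib (2 * m + 2 * n + 1) : ℤ) = b * a + B * A := by
    rw [Nat.fib_add]; push_cast; ring
  have hsum2 : (Nat.fib (2 * m + 2 * n + 2) : ℤ) = B * a + (b + B) * A := by
    have : 2 * m + 2 * n + 2 = (2 * m + 1) + 2 * n + 1 := by ring
    rw [this, Nat.fib_add, Nat.fib_add_two]; push_cast; ring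
  have hF : (Nat.fib (2 * m + 2 * n) : ℤ) = B * a + b * A - b * a := by
    have h3 : (Nat.fib (2 * m + 2 * n + 2) : ℤ)
        = Nat.fib (2 * m + 2 * n) + Nat.fib (2 * m + 2 * n + 1) := by
      rw [Nat.fib_add_two]; push_cast; ring
    rw [hsum1, hsum2] at h3
    linarith
  have hLab : (lucas (2 * m + 2 * n) : ℤ)
      = 3 * b * a + 2 * B * A - B * a - b * A := by
    rw [lucas_int, hsum1, hF]; ring
  have hLa : (lucas (2 * n) : ℤ) = 2 * A - a := by rw [lucas_int, ← hA, ← ha]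
  have hLb : (lucas (2 * m) : ℤ) = 2 * B - b := by rw [lucas_int, ← hB, ← hb]
  have key : (lucas (2 * n) : ℤ) ^ 2 + lucas (2 * m) ^ 2
      + 5 * (Nat.fib (2 * m + 2 * n) : ℤ) ^ 2
      = lucas (2 * n) * lucas (2 * m) * lucas (2 * m + 2 * n) := by
    rw [hLa, hLb, hLab, hF]
    linear_combination (4 - 8 * B * B + 8 * b * B + 3 * b * b) * cA
      + (-4 - 5 * a * a) * cB
  exact_mod_cast key
end
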